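/- arXiv:0708.3499 — 2 statements merged into one kernel-verified Lean document; each statement's English description precedes it below -/
import Mathlib

section
/- Let N=(V,E) be a tree-child phylogenetic network and let u,v∈V. If μ(u) = μ(v), then u and v are connected by an elementary path: either there is a directed path from u to v or one from v to u, and this path is elementary, i.e., its origin has out-degree 1 and all its intermediate nodes have in-degree 1 and out-degree 1. -/
/-- Acyclicity of a directed graph given by a Boolean adjacency function. -/
def Acyclic {V : Type*} (E : V → V → Bool) : Prop :=
  ∀ v : V, ¬ Relation.TransGen (fun a b => E a b = true) v v

/-- `p` is a directed path from `u` to `v`: a nonempty list of nodes starting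
at `u`, ending at `v`, with consecutive nodes joined by arcs. -/
def IsWalk {V : Type*} (E : V → V → Bool) (u v : V) (p : List V) : Prop :=
  p.head? = some u ∧ p.getLast? = some v ∧ p.Chain' (fun a b => E a b = true)

/-- There is a directed path (possibly trivial) from `u` to `v`: the path ordering. -/
def Reaches {V : Type*} (E : V → V → Bool) (u v : V) : Prop :=
  ∃ p, IsWalk E u v p

/-- The in-degree of a node. -/
def inDeg {V : Type*} [Fintype V] (E : V → V → Bool) (v : V) : ℕ :=
  (Finset.univ.filter (fun u => E u v = true)).card

/-- The out-degree of a node. -/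
def outDeg {V : Type*} [Fintype V] (E : V → V → Bool) (u : V) : ℕ :=
  (Finset.univ.filter (fun v => E u v = true)).card

/-- A phylogenetic network on the label set `{1,…,n}`: a rooted DAG (exactly one root)
whose leaves (nodes of out-degree 0) are bijectively labeled by `Fin n`. -/
structure PhyloNetwork (V : Type*) [Fintype V] (n : ℕ) where
  E : V → V → Bool
  acyclic : Acyclic E
  rooted : ∃! r : V, inDeg E r = 0
  leaf : Fin n → V
  leaf_isLeaf : ∀ i, outDeg E (leaf i) = 0
  leaf_inj : Function.Injective leaf
  leaf_surj : ∀ v, outDeg E v = 0 → ∃ i, leaf i = v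

/-- A phylogenetic network is tree-child when every internal node has at least one
child that is a tree node (in-degree at most 1). -/
def TreeChild {V : Type*} [Fintype V] {n : ℕ} (N : PhyloNetwork V n) : Prop :=
  ∀ u : V, 0 < outDeg N.E u → ∃ v : V, N.E u v = true ∧ inDeg N.E v ≤ 1

/-- The μ-vector of a node: its `i`-th entry is the number of directed paths from `u`
to the leaf labeled `i`. -/
noncomputable def mu {V : Type*} [Fintype V] {n : ℕ} (N : PhyloNetwork V n) (u : V) :
    Fin n → ℕ :=
  fun i => Set.ncard {p : List V | IsWalk N.E u (N.leaf i) p}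

/-- An elementary path from `u` to `v`: a directed path whose origin has out-degree 1
and all of whose intermediate nodes have in-degree 1 and out-degree 1. -/
def IsElementaryWalk {V : Type*} [Fintype V] (E : V → V → Bool) (u v : V)
    (p : List V) : Prop :=
  IsWalk E u v p ∧ outDeg E u = 1 ∧
    ∀ w ∈ p.tail.dropLast, inDeg E w = 1 ∧ outDeg E w = 1

section helpers
open Relation List
variable {V : Type*} [Fintype V] {E : V → V → Bool}

lemma walk_eq_cons {u v : V} {p : List V} (hp : IsWalk E u v p) :
    ∃ t, p = u :: t := by
  cases p with
  | nil => simp [IsWalk] at hp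
  | cons a t =>
    obtain ⟨h1, -, -⟩ := hp
    simp only [head?_cons, Option.some.injEq] at h1
    exact ⟨t, by rw [h1]⟩

lemma walk_cons_cons {u v a b : V} {l : List V} (hp : IsWalk E u v (a :: b :: l)) :
    a = u ∧ E a b = true ∧ IsWalk E b v (b :: l) := by
  obtain ⟨h1, h2, h3⟩ := hp
  simp only [head?_cons, Option.some.injEq] at h1
  rw [getLast?_cons_cons] at h2
  simp only [Chain', isChain_cons_cons] at h3
  exact ⟨h1, h3.1, by simp [IsWalk, Chain', h2, h3.2]⟩

lemma walk_single {u v a : V} (hp : IsWalk E u v [a]) : u = a ∧ v = a := by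
  obtain ⟨h1, h2, -⟩ := hp
  simp only [head?_cons, Option.some.injEq] at h1
  simp only [getLast?_singleton, Option.some.injEq] at h2
  exact ⟨h1.symm, h2.symm⟩

lemma walk_cons {u v c : V} {p : List V} (he : E u c = true) (hp : IsWalk E c v p) :
    IsWalk E u v (u :: p) := by
  obtain ⟨t, rfl⟩ := walk_eq_cons hp
  exact ⟨head?_cons, by
    rw [getLast?_cons_cons]; exact hp.2.1, isChain_cons_cons.mpr ⟨he, hp.2.2⟩⟩

lemma walk_refl (u : V) : IsWalk E u u [u] := by
  simp [IsWalk]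
  exact List.isChain_singleton u

lemma walk_transGen : ∀ {p : List V} {u v : V}, IsWalk E u v p →
    u = v ∨ Relation.TransGen (fun a b => E a b = true) u v := by
  intro p
  induction p with
  | nil => intro u v hp; simp [IsWalk] at hp
  | cons a t ih =>
    intro u v hp
    cases t with
    | nil => exact Or.inl ((walk_single hp).1.trans (walk_single hp).2.symm
    )
    | cons b l =>
      obtain ⟨rfl, he, hw⟩ := walk_cons_cons hp
      rcases ih hw with rfl | htg
      · exact Or.inr (TransGen.single he)
      · exact Or.inr (TransGen.head he htg)

lemma walk_nodup (hac : Acyclic E) {u v : V} {p : List V} (hp : IsWalk E u v p) :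
    p.Nodup := by
  by_contra hnd
  obtain ⟨a, ha⟩ := List.exists_duplicate_iff_not_nodup.mpr hnd
  have hsub : [a, a] <+ p := List.duplicate_iff_sublist.mp ha
  have hch : p.Chain' (Relation.TransGen fun a b => E a b = true) :=
    hp.2.2.imp fun _ _ h => TransGen.single h
  have := hch.sublist hsub
  rw [isChain_cons_cons] at this
  exact hac a this.1

lemma walk_finite (hac : Acyclic E) (u v : V) :
    {p : List V | IsWalk E u v p}.Finite := by
  apply Set.Finite.subset (List.finite_length_le (α := V) (Fintype.card V))
  intro p hp
  exact (walk_nodup hac hp).length_le_card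

lemma ncard_le_of_edge (hac : Acyclic E) {u c : V} (he : E u c = true) (w : V) :
    Set.ncard {p : List V | IsWalk E c w p} ≤ Set.ncard {p : List V | IsWalk E u w p} := by
  have himg : (fun p => u :: p) '' {p : List V | IsWalk E c w p} ⊆
      {p : List V | IsWalk E u w p} := by
    rintro q ⟨p, hp, rfl⟩
    exact walk_cons he hp
  calc Set.ncard {p : List V | IsWalk E c w p}
      = Set.ncard ((fun p => u :: p) '' {p : List V | IsWalk E c w p}) :=
        (Set.ncard_image_of_injective _ (fun a b h => by simpa using h)).symm
    _ ≤ _ := Set.ncard_le_ncard himg (walk_finite hac u w)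

lemma ncard_le_of_walk (hac : Acyclic E) {c v : V} {q : List V} (hq : IsWalk E c v q)
    (w : V) :
    Set.ncard {p : List V | IsWalk E v w p} ≤ Set.ncard {p : List V | IsWalk E c w p} := by
  induction q generalizing c with
  | nil => simp [IsWalk] at hq
  | cons a t ih =>
    cases t with
    | nil =>
      obtain ⟨rfl, rfl⟩ := walk_single hq
      exact le_rfl
    | cons b l =>
      obtain ⟨rfl, he, hw⟩ := walk_cons_cons hq
      exact (ih hw).trans (ncard_le_of_edge hac he w)

lemma ncard_add_le_of_two_children (hac : Acyclic E) {u c c' : V} (he : E u c = true)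
    (he' : E u c' = true) (hne : c ≠ c') (w : V) :
    Set.ncard {p : List V | IsWalk E c w p} + Set.ncard {p : List V | IsWalk E c' w p}
      ≤ Set.ncard {p : List V | IsWalk E u w p} := by
  set A := (fun p => u :: p) '' {p : List V | IsWalk E c w p} with hA
  set B := (fun p => u :: p) '' {p : List V | IsWalk E c' w p} with hB
  have hinj : Function.Injective (fun p : List V => u :: p) := fun a b h => by simpa using h
  have hAs : A ⊆ {p : List V | IsWalk E u w p} := by
    rintro q ⟨p, hp, rfl⟩; exact walk_cons he hp
  have hBs : B ⊆ {p : List V | IsWalk E u w p} := by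
    rintro q ⟨p, hp, rfl⟩; exact walk_cons he' hp
  have hdisj : Disjoint A B := by
    rw [Set.disjoint_left]
    rintro q ⟨p, hp, rfl⟩ ⟨p', hp', hq⟩
    obtain ⟨t, rfl⟩ := walk_eq_cons hp
    obtain ⟨t', rfl⟩ := walk_eq_cons hp'
    simp only [List.cons.injEq] at hq
    exact hne hq.2.1.symm
  have hfin : {p : List V | IsWalk E u w p}.Finite := walk_finite hac u w
  calc Set.ncard {p : List V | IsWalk E c w p} + Set.ncard {p : List V | IsWalk E c' w p}
      = A.ncard + B.ncard := by
        rw [hA, hB, Set.ncard_image_of_injective _ hinj, Set.ncard_image_of_injective _ hinj]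
    _ = (A ∪ B).ncard := (Set.ncard_union_eq hdisj (hfin.subset hAs) (hfin.subset hBs)).symm
    _ ≤ _ := Set.ncard_le_ncard (Set.union_subset hAs hBs) hfin

lemma pred_in_chain {R : V → V → Prop} :
    ∀ {p : List V}, p.Chain' R → ∀ {y : V}, y ∈ p.tail → ∃ z ∈ p, R z y := by
  intro p
  induction p with
  | nil => intro _ y hy; simp at hy
  | cons a t ih =>
    intro hc y hy
    simp only [List.tail_cons] at hy
    cases t with
    | nil => simp at hy
    | cons b l =>
      simp only [Chain', isChain_cons_cons] at hc
      rcases List.mem_cons.mp hy with rfl | hy'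
      · exact ⟨a, List.mem_cons_self, hc.1⟩
      · obtain ⟨z, hz, hzy⟩ := ih hc.2 hy'
        exact ⟨z, List.mem_cons_of_mem _ hz, hzy⟩

lemma mem_of_getLast?' {α : Type*} {l : List α} {a : α} (h : l.getLast? = some a) :
    a ∈ l := by
  rw [List.getLast?_eq_some_iff] at h
  obtain ⟨ys, rfl⟩ := h
  simp

lemma backtrace {u ℓ : V} {p : List V} (hp : IsWalk E u ℓ p)
    (htree : ∀ w ∈ p.tail, inDeg E w = 1) :
    ∀ {q : List V} {x : V}, IsWalk E x ℓ q → x ∈ p ∨ u ∈ q := by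
  intro q
  induction q with
  | nil => intro x hq; simp [IsWalk] at hq
  | cons a t ih =>
    intro x hq
    cases t with
    | nil =>
      obtain ⟨rfl, rfl⟩ := walk_single hq
      left
      have := hp.2.1
      exact mem_of_getLast?' this
    | cons b l =>
      obtain ⟨rfl, he, hw⟩ := walk_cons_cons hq
      rcases ih hw with hb | hu
      · obtain ⟨tp, rfl⟩ := walk_eq_cons hp
        rcases List.mem_cons.mp hb with rfl | hb'
        · exact Or.inr (List.mem_cons_of_mem _ List.mem_cons_self)
        · -- b ∈ tail, so inDeg b = 1 and its chain-predecessor equals x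
          have hdeg := htree b (by simpa using hb')
          obtain ⟨z, hz, hzb⟩ := pred_in_chain hp.2.2 (y := b) (by simpa using hb')
          have hxz : a = z := by
            have h1 : a ∈ Finset.univ.filter (fun w => E w b = true) := by
              simp [he]
            have h2 : z ∈ Finset.univ.filter (fun w => E w b = true) := by
              simp [hzb]
            exact Finset.card_le_one.mp hdeg.le a h1 z h2
          exact Or.inl (hxz ▸ hz)
      · exact Or.inr (List.mem_cons_of_mem _ hu)

end helpers

section main
open Relation List

variable {V : Type*} [Fintype V]

lemma acyclic_wf {E : V → V → Bool} (hac : Acyclic E) :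
    WellFounded (fun c u : V => E u c = true) := by
  have h1 : WellFounded (fun c u : V => Relation.TransGen (fun a b => E a b = true) u c) := by
    letI : IsTrans V (fun c u : V => Relation.TransGen (fun a b => E a b = true) u c) :=
      ⟨fun a b c hab hbc => hbc.trans hab⟩
    letI : IsIrrefl V (fun c u : V => Relation.TransGen (fun a b => E a b = true) u c) :=
      ⟨fun a ha => hac a ha⟩
    exact Finite.wellFounded_of_trans_of_irrefl _
  refine Subrelation.wf ?_ h1
  intro x y hxy
  exact Relation.TransGen.single hxy

lemma exists_tree_walk {n : ℕ} (N : PhyloNetwork V n) (h : TreeChild N) (u : V) :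
    ∃ (i : Fin n) (p : List V), IsWalk N.E u (N.leaf i) p ∧
      ∀ w ∈ p.tail, inDeg N.E w = 1 := by
  refine (acyclic_wf N.acyclic).induction
    (C := fun u => ∃ (i : Fin n) (p : List V), IsWalk N.E u (N.leaf i) p ∧
      ∀ w ∈ p.tail, inDeg N.E w = 1) u ?_
  intro u ih
  by_cases hdeg : outDeg N.E u = 0
  · obtain ⟨i, hi⟩ := N.leaf_surj u hdeg
    exact ⟨i, [u], by rw [hi]; exact walk_refl u, by simp⟩
  · obtain ⟨c, hc, hcd⟩ := h u (Nat.pos_of_ne_zero hdeg)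
    obtain ⟨i, p, hp, htail⟩ := ih c hc
    refine ⟨i, u :: p, walk_cons hc hp, ?_⟩
    intro w hw
    obtain ⟨t, rfl⟩ := walk_eq_cons hp
    simp only [List.tail_cons] at hw
    rcases List.mem_cons.mp hw with rfl | hw'
    · have h1 : u ∈ Finset.univ.filter (fun x => N.E x w = true) := by simp [hc]
      have h2 : 0 < inDeg N.E w := Finset.card_pos.mpr ⟨u, h1⟩
      omega
    · exact htail w hw'

lemma elem_walk_of_mu_eq {n : ℕ} (N : PhyloNetwork V n) (h : TreeChild N) :
    ∀ (m : ℕ) (p : List V) (u v : V), p.length ≤ m → IsWalk N.E u v p → u ≠ v →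
      mu N u = mu N v → ∃ q, IsElementaryWalk N.E u v q := by
  intro m
  induction m with
  | zero =>
    intro p u v hlen hp _ _
    obtain ⟨t, rfl⟩ := walk_eq_cons hp
    simp at hlen
  | succ m ih =>
    intro p u v hlen hp hne heq
    obtain ⟨t, rfl⟩ := walk_eq_cons hp
    cases t with
    | nil => exact absurd (walk_single hp).2.symm hne
    | cons c l =>
      obtain ⟨-, he, hw⟩ := walk_cons_cons hp
      have hmono_cv : ∀ j, Set.ncard {q : List V | IsWalk N.E v (N.leaf j) q} ≤
          Set.ncard {q : List V | IsWalk N.E c (N.leaf j) q} :=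
        fun j => ncard_le_of_walk N.acyclic hw _
      have hmono_uc : ∀ j, Set.ncard {q : List V | IsWalk N.E c (N.leaf j) q} ≤
          Set.ncard {q : List V | IsWalk N.E u (N.leaf j) q} :=
        fun j => ncard_le_of_edge N.acyclic he _
      have heq' : ∀ j, Set.ncard {q : List V | IsWalk N.E u (N.leaf j) q} =
          Set.ncard {q : List V | IsWalk N.E v (N.leaf j) q} :=
        fun j => by simpa [mu] using congrFun heq j
      have hcmem : c ∈ Finset.univ.filter (fun x => N.E u x = true) := by simp [he]
      have hout1 : 0 < outDeg N.E u := Finset.card_pos.mpr ⟨c, hcmem⟩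
      have hout : outDeg N.E u = 1 := by
        by_contra hne1
        have h2 : 1 < outDeg N.E u := by omega
        obtain ⟨c', hc', hcc'⟩ := Finset.exists_mem_ne h2 c
        have hc'e : N.E u c' = true := (Finset.mem_filter.mp hc').2
        obtain ⟨i, p', hp', -⟩ := exists_tree_walk N h c'
        have hpos : 0 < Set.ncard {q : List V | IsWalk N.E c' (N.leaf i) q} :=
          (Set.ncard_pos (walk_finite N.acyclic _ _)).mpr ⟨p', hp'⟩
        have hadd := ncard_add_le_of_two_children N.acyclic he hc'e (Ne.symm hcc') (N.leaf i)
        have h3 := hmono_cv i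
        have h4 := heq' i
        omega
      have hcin : inDeg N.E c = 1 := by
        obtain ⟨d, hd, hdin⟩ := h u hout1
        have hdmem : d ∈ Finset.univ.filter (fun x => N.E u x = true) := by simp [hd]
        have hdc : d = c := Finset.card_le_one.mp hout.le d hdmem c hcmem
        have humem : u ∈ Finset.univ.filter (fun x => N.E x c = true) := by simp [he]
        have h5 : 0 < inDeg N.E c := Finset.card_pos.mpr ⟨u, humem⟩
        subst hdc
        omega
      have heqc : mu N c = mu N v := by
        funext j
        have h1 := hmono_cv j
        have h2 := hmono_uc j
        have h3 := heq' j
        simp only [mu]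
        omega
      by_cases hcv : c = v
      · subst hcv
        refine ⟨[u, c], ⟨by simp, by simp, ?_⟩, hout, by simp⟩
        simp [List.Chain', List.isChain_cons_cons, he]
      · have hlen' : (c :: l).length ≤ m := by
          simp only [List.length_cons] at hlen ⊢
          omega
        obtain ⟨q, hq, hqout, hqmid⟩ := ih (c :: l) c v hlen' hw hcv heqc
        obtain ⟨t', rfl⟩ := walk_eq_cons hq
        cases t' with
        | nil => exact absurd (walk_single hq).2.symm hcv
        | cons x t'' =>
          refine ⟨u :: c :: x :: t'', walk_cons he hq, hout, ?_⟩
          intro w hw'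
          simp only [List.tail_cons, List.dropLast_cons₂] at hw'
          rcases List.mem_cons.mp hw' with rfl | hw''
          · exact ⟨hcin, hqout⟩
          · exact hqmid w (by simpa using hw'')

end main

/-- In a tree-child phylogenetic network, if `μ(u) = μ(v)` then `u` and `v` are
connected by an elementary path. -/
theorem elementary_of_mu_eq {V : Type*} [Fintype V] {n : ℕ} (N : PhyloNetwork V n)
    (h : TreeChild N) (u v : V) (heq : mu N u = mu N v) :
    u = v ∨ (∃ p, IsElementaryWalk N.E u v p) ∨ (∃ p, IsElementaryWalk N.E v u p) := by
  by_cases huv : u = v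
  · exact Or.inl huv
  obtain ⟨i, p, hp, htail⟩ := exists_tree_walk N h u
  have h1 : mu N u i ≠ 0 := by
    have : 0 < mu N u i := by
      simpa [mu] using (Set.ncard_pos (walk_finite N.acyclic _ _)).mpr ⟨p, hp⟩
    omega
  have h2 : mu N v i ≠ 0 := heq ▸ h1
  have hv : {q : List V | IsWalk N.E v (N.leaf i) q}.Nonempty :=
    Set.nonempty_of_ncard_ne_zero (by simpa [mu] using h2)
  obtain ⟨q, hq⟩ := hv
  rcases backtrace hp htail hq with hvp | huq
  · obtain ⟨l1, l2, rfl⟩ := List.append_of_mem hvp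
    have hwuv : IsWalk N.E u v (l1 ++ [v]) := by
      cases l1 with
      | nil =>
        exfalso
        have := hp.1
        simp only [List.nil_append, List.head?_cons, Option.some.injEq] at this
        exact huv this.symm
      | cons a t =>
        refine ⟨?_, List.getLast?_concat, hp.2.2.prefix ⟨l2, by simp⟩⟩
        have h3 := hp.1
        simp only [List.cons_append, List.head?_cons] at h3 ⊢
        exact h3
    exact Or.inr (Or.inl (elem_walk_of_mu_eq N h _ _ u v le_rfl hwuv huv heq))
  · obtain ⟨l1, l2, rfl⟩ := List.append_of_mem huq
    have hwvu : IsWalk N.E v u (l1 ++ [u]) := by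
      cases l1 with
      | nil =>
        exfalso
        have := hq.1
        simp only [List.nil_append, List.head?_cons, Option.some.injEq] at this
        exact huv this
      | cons a t =>
        refine ⟨?_, List.getLast?_concat, hq.2.2.prefix ⟨l2, by simp⟩⟩
        have h3 := hq.1
        simp only [List.cons_append, List.head?_cons] at h3 ⊢
        exact h3
    exact Or.inr (Or.inr (elem_walk_of_mu_eq N h _ _ v u le_rfl hwvu (Ne.symm huv) heq.symm))
end

section
/- Let N_1 and N_2 be tree-child phylogenetic networks on the same set of n taxa, both without out-degree 1 tree nodes and with every hybrid node of in-degree at most m. Then d_μ(N_1,N_2) ≤ 2(m+1)(n−1). -/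
/-- The μ-representation of a network: the multiset of μ-vectors of all its nodes. -/
noncomputable def muRep {V : Type*} [Fintype V] {n : ℕ} (N : PhyloNetwork V n) :
    Multiset (Fin n → ℕ) :=
  (Finset.univ.val : Multiset V).map (mu N)

/-- The μ-distance: the cardinality of the multiset symmetric difference of the
μ-representations. -/
noncomputable def muDist {V₁ V₂ : Type*} [Fintype V₁] [Fintype V₂] {n : ℕ}
    (N₁ : PhyloNetwork V₁ n) (N₂ : PhyloNetwork V₂ n) : ℕ :=
  Multiset.card (muRep N₁ - muRep N₂) + Multiset.card (muRep N₂ - muRep N₁)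

section Aux
variable {V : Type*} [Fintype V] {n : ℕ}

lemma inDeg_pos {E : V → V → Bool} {a b : V} (h : E a b = true) : 0 < inDeg E b :=
  Finset.card_pos.mpr ⟨a, by simp [h]⟩

lemma outDeg_pos {E : V → V → Bool} {a b : V} (h : E a b = true) : 0 < outDeg E a :=
  Finset.card_pos.mpr ⟨b, by simp [h]⟩

lemma parent_unique {E : V → V → Bool} {a b w : V} (hw : inDeg E w ≤ 1)
    (ha : E a w = true) (hb : E b w = true) : a = b := by
  have := Finset.card_le_one.mp hw a (by simp [ha]) b (by simp [hb])
  exact this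

lemma edge_ne (N : PhyloNetwork V n) {a b : V} (h : N.E a b = true) : a ≠ b := by
  rintro rfl; exact N.acyclic a (Relation.TransGen.single h)

noncomputable def step (N : PhyloNetwork V n) (hT : TreeChild N) (v : V) : V :=
  if hv : 0 < outDeg N.E v then (hT v hv).choose else v

lemma step_edge (N : PhyloNetwork V n) (hT : TreeChild N) {v : V}
    (hv : 0 < outDeg N.E v) : N.E v (step N hT v) = true := by
  rw [step, dif_pos hv]; exact (hT v hv).choose_spec.1

lemma step_tree (N : PhyloNetwork V n) (hT : TreeChild N) {v : V}
    (hv : 0 < outDeg N.E v) : inDeg N.E (step N hT v) ≤ 1 := by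
  rw [step, dif_pos hv]; exact (hT v hv).choose_spec.2

lemma step_leaf (N : PhyloNetwork V n) (hT : TreeChild N) {v : V}
    (hv : outDeg N.E v = 0) : step N hT v = v := by
  rw [step, dif_neg]; omega

lemma step_ne (N : PhyloNetwork V n) (hT : TreeChild N) {v : V}
    (hv : 0 < outDeg N.E v) : step N hT v ≠ v :=
  fun h => edge_ne N (step_edge N hT hv) h.symm

/-- the merge lemma: step is injective on non-leaves -/
lemma step_inj (N : PhyloNetwork V n) (hT : TreeChild N) {a b : V}
    (ha : 0 < outDeg N.E a) (hb : 0 < outDeg N.E b)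
    (h : step N hT a = step N hT b) : a = b :=
  parent_unique (step_tree N hT hb) (h ▸ step_edge N hT ha) (step_edge N hT hb)

lemma step_iterate_stable (N : PhyloNetwork V n) (hT : TreeChild N) {v : V}
    (hv : outDeg N.E v = 0) (k : ℕ) : (step N hT)^[k] v = v := by
  induction k with
  | zero => rfl
  | succ k ih => rw [Function.iterate_succ_apply', ih, step_leaf N hT hv]

lemma step_iterate_trans (N : PhyloNetwork V n) (hT : TreeChild N) (v : V) {j : ℕ}
    (hj : 0 < j) (h : ∀ k < j, 0 < outDeg N.E ((step N hT)^[k] v)) :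
    Relation.TransGen (fun a b => N.E a b = true) v ((step N hT)^[j] v) := by
  induction j with
  | zero => omega
  | succ j ih =>
    rcases Nat.eq_zero_or_pos j with rfl | hj'
    · exact Relation.TransGen.single (step_edge N hT (h 0 (by omega)))
    · rw [Function.iterate_succ_apply']
      exact Relation.TransGen.tail (ih hj' (fun k hk => h k (by omega)))
        (step_edge N hT (h j (by omega)))

lemma exists_leaf_iterate (N : PhyloNetwork V n) (hT : TreeChild N) (v : V) :
    ∃ k ≤ Fintype.card V, outDeg N.E ((step N hT)^[k] v) = 0 := by
  by_contra hcon
  push_neg at hcon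
  have hpos : ∀ k ≤ Fintype.card V, 0 < outDeg N.E ((step N hT)^[k] v) :=
    fun k hk => Nat.pos_of_ne_zero (hcon k hk)
  have key : ∀ i j : ℕ, i < j → j ≤ Fintype.card V →
      (step N hT)^[i] v ≠ (step N hT)^[j] v := by
    intro i j hij hjc heq
    have h1 : (step N hT)^[j] v = (step N hT)^[j - i] ((step N hT)^[i] v) := by
      rw [← Function.iterate_add_apply]
      congr 1
      omega
    have h2 : Relation.TransGen (fun a b => N.E a b = true) ((step N hT)^[i] v)
        ((step N hT)^[j - i] ((step N hT)^[i] v)) := by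
      apply step_iterate_trans N hT _ (by omega)
      intro k hk
      rw [← Function.iterate_add_apply]
      exact hpos (k + i) (by omega)
    rw [← h1, ← heq] at h2
    exact N.acyclic _ h2
  have hinj : Function.Injective (fun i : Fin (Fintype.card V + 1) => (step N hT)^[(i : ℕ)] v) := by
    intro i j hij
    by_contra hne
    rcases Nat.lt_or_ge (i : ℕ) (j : ℕ) with h | h
    · exact key i j h (by omega) hij
    · have h' : (j : ℕ) < (i : ℕ) := by
        rcases Nat.lt_or_ge (j : ℕ) (i : ℕ) with h' | h'
        · exact h'
        · exact absurd (Fin.ext (by omega)) hne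
      exact key j i h' (by omega) hij.symm
  have := Fintype.card_le_of_injective _ hinj
  simp at this

noncomputable def toLeaf (N : PhyloNetwork V n) (hT : TreeChild N) (v : V) : V :=
  (step N hT)^[Fintype.card V] v

lemma toLeaf_isLeaf (N : PhyloNetwork V n) (hT : TreeChild N) (v : V) :
    outDeg N.E (toLeaf N hT v) = 0 := by
  obtain ⟨k, hk, hleaf⟩ := exists_leaf_iterate N hT v
  have : (step N hT)^[Fintype.card V] v = (step N hT)^[k] v := by
    have : Fintype.card V = (Fintype.card V - k) + k := by omega
    rw [this, Function.iterate_add_apply, step_iterate_stable N hT hleaf]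
  rw [toLeaf, this]
  exact hleaf


/-- Orbits of distinct nodes of in-degree ≠ 1 are disjoint. -/
lemma orbit_disjoint (N : PhyloNetwork V n) (hT : TreeChild N) {a b : V}
    (ha : inDeg N.E a ≠ 1) (hb : inDeg N.E b ≠ 1) (hab : a ≠ b) :
    ∀ k i j, i + j = k → (step N hT)^[i] a ≠ (step N hT)^[j] b := by
  have main : ∀ k, (∀ k' < k, ∀ i j, i + j = k' → (step N hT)^[i] a ≠ (step N hT)^[j] b) →
      ∀ i j, i + j = k → (step N hT)^[i] a ≠ (step N hT)^[j] b := by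
    intro k IH i j hk heq
    rcases Nat.eq_zero_or_pos i with rfl | hi
    · rcases Nat.eq_zero_or_pos j with rfl | hj
      · simp only [Function.iterate_zero_apply] at heq
        exact hab heq
      · simp only [Function.iterate_zero_apply] at heq
        set y := (step N hT)^[j-1] b with hy
        have hstep : step N hT y = a := by
          rw [heq, hy, ← Function.iterate_succ_apply' (step N hT) (j-1) b,
            ]
          congr 1
          omega
        rcases Nat.eq_zero_or_pos (outDeg N.E y) with hy0 | hy0
        · have hya : y = a := by rw [← hstep, step_leaf N hT hy0]
          refine IH (j-1) (by omega) 0 (j-1) (by omega) ?_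
          simp only [Function.iterate_zero_apply]
          rw [← hya, hy]
        · have h1 : 0 < inDeg N.E a := inDeg_pos (hstep ▸ step_edge N hT hy0)
          have h2 : inDeg N.E a ≤ 1 := hstep ▸ step_tree N hT hy0
          omega
    · rcases Nat.eq_zero_or_pos j with rfl | hj
      · simp only [Function.iterate_zero_apply] at heq
        set x := (step N hT)^[i-1] a with hx
        have hstep : step N hT x = b := by
          rw [← heq, hx, ← Function.iterate_succ_apply' (step N hT) (i-1) a,
            ]
          congr 1
          omega
        rcases Nat.eq_zero_or_pos (outDeg N.E x) with hx0 | hx0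
        · have hxb : x = b := by rw [← hstep, step_leaf N hT hx0]
          refine IH (i-1) (by omega) (i-1) 0 (by omega) ?_
          simp only [Function.iterate_zero_apply]
          rw [← hx, hxb]
        · have h1 : 0 < inDeg N.E b := inDeg_pos (hstep ▸ step_edge N hT hx0)
          have h2 : inDeg N.E b ≤ 1 := hstep ▸ step_tree N hT hx0
          omega
      · set x := (step N hT)^[i-1] a with hx
        set y := (step N hT)^[j-1] b with hy
        have hsx : step N hT x = (step N hT)^[i] a := by
          rw [hx, ← Function.iterate_succ_apply' (step N hT) (i-1) a,
            ]
          congr 1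
          omega
        have hsy : step N hT y = (step N hT)^[j] b := by
          rw [hy, ← Function.iterate_succ_apply' (step N hT) (j-1) b,
            ]
          congr 1
          omega
        rcases Nat.eq_zero_or_pos (outDeg N.E x) with hx0 | hx0
        · have : (step N hT)^[i-1] a = (step N hT)^[j] b := by
            rw [← heq, ← hsx, hx, step_leaf N hT hx0]
          exact IH (i-1+j) (by omega) (i-1) j rfl this
        rcases Nat.eq_zero_or_pos (outDeg N.E y) with hy0 | hy0
        · have : (step N hT)^[i] a = (step N hT)^[j-1] b := by
            rw [heq, ← hsy, hy, step_leaf N hT hy0]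
          exact IH (i+(j-1)) (by omega) i (j-1) rfl this
        · have hxy : x = y := step_inj N hT hx0 hy0 (by rw [hsx, hsy, heq])
          refine IH (i-1+(j-1)) (by omega) (i-1) (j-1) rfl ?_
          rw [← hx, ← hy, hxy]
  intro k
  induction k using Nat.strong_induction_on with
  | _ k IH => exact main k IH

lemma toLeaf_inj (N : PhyloNetwork V n) (hT : TreeChild N) {a b : V}
    (ha : inDeg N.E a ≠ 1) (hb : inDeg N.E b ≠ 1)
    (h : toLeaf N hT a = toLeaf N hT b) : a = b := by
  by_contra hab
  exact orbit_disjoint N hT ha hb hab _ (Fintype.card V) (Fintype.card V) rfl h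


lemma leafSet_card (N : PhyloNetwork V n) :
    (Finset.univ.filter (fun v => outDeg N.E v = 0)).card = n := by
  classical
  have himg : Finset.univ.image N.leaf = Finset.univ.filter (fun v => outDeg N.E v = 0) := by
    ext v
    simp only [Finset.mem_image, Finset.mem_filter, Finset.mem_univ, true_and]
    constructor
    · rintro ⟨i, rfl⟩; exact N.leaf_isLeaf i
    · intro hv; obtain ⟨i, hi⟩ := N.leaf_surj v hv; exact ⟨i, hi⟩
  rw [← himg, Finset.card_image_of_injective _ N.leaf_inj, Finset.card_univ, Fintype.card_fin]

lemma root_filter (N : PhyloNetwork V n) :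
    Finset.univ.filter (fun v => inDeg N.E v = 0) = {N.rooted.choose} := by
  obtain ⟨hr, hu⟩ := N.rooted.choose_spec
  ext v
  simp only [Finset.mem_filter, Finset.mem_univ, true_and, Finset.mem_singleton]
  exact ⟨fun h => hu v h, fun h => h ▸ hr⟩

lemma hybrid_card (N : PhyloNetwork V n) (hT : TreeChild N) :
    (Finset.univ.filter (fun v => 1 < inDeg N.E v)).card + 1 ≤ n := by
  classical
  have hn := leafSet_card N
  have hsub : (Finset.univ.filter (fun v => inDeg N.E v ≠ 1)).card
      ≤ (Finset.univ.filter (fun v => outDeg N.E v = 0)).card := by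
    apply Finset.card_le_card_of_injOn (toLeaf N hT)
    · intro v _
      simp only [Finset.mem_coe, Finset.mem_filter, Finset.mem_univ, true_and]
      exact toLeaf_isLeaf N hT v
    · intro a ha b hb h
      simp only [Finset.coe_filter, Set.mem_setOf_eq, Finset.mem_univ, true_and] at ha hb
      exact toLeaf_inj N hT ha hb h
  have hsplit : Finset.univ.filter (fun v => inDeg N.E v ≠ 1)
      = Finset.univ.filter (fun v => inDeg N.E v = 0)
        ∪ Finset.univ.filter (fun v => 1 < inDeg N.E v) := by
    ext v
    simp only [Finset.mem_filter, Finset.mem_univ, true_and, Finset.mem_union]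
    omega
  have hdisj : Disjoint (Finset.univ.filter (fun v => inDeg N.E v = 0))
      (Finset.univ.filter (fun v => 1 < inDeg N.E v)) := by
    rw [Finset.disjoint_left]
    intro v hv hv'
    simp only [Finset.mem_filter, Finset.mem_univ, true_and] at hv hv'
    omega
  rw [hsplit, Finset.card_union_of_disjoint hdisj, root_filter N, Finset.card_singleton,
    hn] at hsub
  omega

lemma sum_inDeg_eq_sum_outDeg (E : V → V → Bool) :
    ∑ v, inDeg E v = ∑ v, outDeg E v := by
  unfold inDeg outDeg
  simp_rw [Finset.card_filter]
  exact Finset.sum_comm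

lemma card_bound {m : ℕ} (N : PhyloNetwork V n) (hT : TreeChild N)
    (hout : ∀ v, inDeg N.E v ≤ 1 → outDeg N.E v ≠ 1)
    (hm : ∀ v, 1 < inDeg N.E v → inDeg N.E v ≤ m) :
    Fintype.card V ≤ n + (m + 1) * (n - 1) := by
  classical
  set Ti := Finset.univ.filter (fun v => 0 < outDeg N.E v ∧ inDeg N.E v ≤ 1) with hTi
  set Hi := Finset.univ.filter (fun v => 0 < outDeg N.E v ∧ 1 < inDeg N.E v) with hHi
  set Tl := Finset.univ.filter (fun v => outDeg N.E v = 0 ∧ inDeg N.E v ≤ 1) with hTl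
  set Hl := Finset.univ.filter (fun v => outDeg N.E v = 0 ∧ 1 < inDeg N.E v) with hHl
  -- partition of all vertices
  have e1 : Ti.card + Hi.card + Tl.card + Hl.card = Fintype.card V := by
    rw [hTi, hHi, hTl, hHl]
    simp_rw [Finset.card_filter]
    rw [← Finset.sum_add_distrib, ← Finset.sum_add_distrib, ← Finset.sum_add_distrib,
      ← Finset.card_univ, Finset.card_eq_sum_ones]
    apply Finset.sum_congr rfl
    intro v _
    split_ifs <;> omega
  -- leaves
  have e2 : Tl.card + Hl.card = n := by
    rw [← leafSet_card N, hTl, hHl]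
    simp_rw [Finset.card_filter]
    rw [← Finset.sum_add_distrib]
    apply Finset.sum_congr rfl
    intro v _
    split_ifs <;> omega
  -- lower bound on out-degrees
  have e3 : 2 * Ti.card + Hi.card ≤ ∑ v, outDeg N.E v := by
    have hdisj : Disjoint Ti Hi := by
      rw [Finset.disjoint_left]
      intro v hv hv'
      rw [hTi, Finset.mem_filter] at hv
      rw [hHi, Finset.mem_filter] at hv'
      omega
    calc 2 * Ti.card + Hi.card
        = ∑ _v ∈ Ti, 2 + ∑ _v ∈ Hi, 1 := by
          rw [Finset.sum_const, Finset.sum_const, smul_eq_mul, smul_eq_mul]; ring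
      _ ≤ ∑ v ∈ Ti, outDeg N.E v + ∑ v ∈ Hi, outDeg N.E v := by
          apply Nat.add_le_add
          · apply Finset.sum_le_sum
            intro v hv
            rw [hTi, Finset.mem_filter] at hv
            have := hout v hv.2.2
            omega
          · apply Finset.sum_le_sum
            intro v hv
            rw [hHi, Finset.mem_filter] at hv
            omega
      _ = ∑ v ∈ Ti ∪ Hi, outDeg N.E v := (Finset.sum_union hdisj).symm
      _ ≤ ∑ v, outDeg N.E v := Finset.sum_le_sum_of_subset (Finset.subset_univ _)
  -- upper bound on in-degrees
  have e4 : (∑ v, inDeg N.E v) + 1 ≤ (Ti.card + Tl.card) + m * (Hi.card + Hl.card) := by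
    obtain ⟨hr, _⟩ := N.rooted.choose_spec
    set r := N.rooted.choose with hrr
    set T1 := Finset.univ.filter (fun v => inDeg N.E v ≤ 1) with hT1
    set H := Finset.univ.filter (fun v => 1 < inDeg N.E v) with hH
    have hmemr : r ∈ T1 := by
      rw [hT1, Finset.mem_filter]
      exact ⟨Finset.mem_univ r, by omega⟩
    have hsplitsum : ∑ v, inDeg N.E v = ∑ v ∈ T1, inDeg N.E v + ∑ v ∈ H, inDeg N.E v := by
      rw [hT1, hH]
      rw [← Finset.sum_filter_add_sum_filter_not Finset.univ (fun v => inDeg N.E v ≤ 1)]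
      congr 1
      apply Finset.sum_congr _ (fun _ _ => rfl)
      apply Finset.filter_congr
      intro v _
      simp [Nat.not_le]
    have hT1sum : ∑ v ∈ T1, inDeg N.E v + 1 ≤ T1.card := by
      have h1 : ∑ v ∈ T1, inDeg N.E v = ∑ v ∈ T1.erase r, inDeg N.E v := by
        rw [← Finset.sum_erase_add T1 _ hmemr, hr, Nat.add_zero]
      have h2 : ∑ v ∈ T1.erase r, inDeg N.E v ≤ (T1.erase r).card := by
        rw [Finset.card_eq_sum_ones]
        apply Finset.sum_le_sum
        intro v hv
        have := Finset.mem_of_mem_erase hv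
        rw [hT1, Finset.mem_filter] at this
        omega
      have h3 : (T1.erase r).card = T1.card - 1 := Finset.card_erase_of_mem hmemr
      have h4 : 1 ≤ T1.card := Finset.card_pos.mpr ⟨r, hmemr⟩
      omega
    have hHsum : ∑ v ∈ H, inDeg N.E v ≤ m * H.card := by
      calc ∑ v ∈ H, inDeg N.E v ≤ ∑ _v ∈ H, m := by
            apply Finset.sum_le_sum
            intro v hv
            rw [hH, Finset.mem_filter] at hv
            exact hm v hv.2
        _ = m * H.card := by rw [Finset.sum_const, smul_eq_mul, mul_comm]
    have hT1card : T1.card = Ti.card + Tl.card := by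
      rw [hT1, hTi, hTl]
      simp_rw [Finset.card_filter]
      rw [← Finset.sum_add_distrib]
      apply Finset.sum_congr rfl
      intro v _
      split_ifs <;> omega
    have hHcard : H.card = Hi.card + Hl.card := by
      rw [hH, hHi, hHl]
      simp_rw [Finset.card_filter]
      rw [← Finset.sum_add_distrib]
      apply Finset.sum_congr rfl
      intro v _
      split_ifs <;> omega
    rw [hsplitsum, ← hT1card, ← hHcard]
    omega
  -- hybrid bound
  have e5 : Hi.card + Hl.card + 1 ≤ n := by
    have := hybrid_card N hT
    have hHcard : (Finset.univ.filter (fun v => 1 < inDeg N.E v)).card = Hi.card + Hl.card := by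
      rw [hHi, hHl]
      simp_rw [Finset.card_filter]
      rw [← Finset.sum_add_distrib]
      apply Finset.sum_congr rfl
      intro v _
      split_ifs <;> omega
    omega
  have hMle : m * (Hi.card + Hl.card) ≤ m * (n - 1) := Nat.mul_le_mul_left m (by omega)
  have hsums := sum_inDeg_eq_sum_outDeg N.E
  have hgoal : (m + 1) * (n - 1) = m * (n - 1) + (n - 1) := by rw [Nat.succ_mul]
  rw [hgoal]
  -- linear arithmetic after abstracting the two products
  generalize hP : m * (Hi.card + Hl.card) = P at e4 hMle
  generalize hQ : m * (n - 1) = Q at hMle ⊢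
  omega



lemma mu_leaf (N : PhyloNetwork V n) (i j : Fin n) :
    mu N (N.leaf i) j = if j = i then 1 else 0 := by
  have hset : {p : List V | IsWalk N.E (N.leaf i) (N.leaf j) p}
      = if j = i then {[N.leaf i]} else (∅ : Set (List V)) := by
    ext p
    simp only [Set.mem_setOf_eq]
    constructor
    · rintro ⟨h1, h2, h3⟩
      cases p with
      | nil => simp at h1
      | cons a l =>
        simp only [List.head?_cons, Option.some.injEq] at h1
        subst h1
        cases l with
        | nil =>
          simp only [List.getLast?_singleton, Option.some.injEq] at h2
          have : j = i := N.leaf_inj h2.symm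
          subst this
          simp
        | cons b l' =>
          simp only [List.Chain', List.isChain_cons_cons] at h3
          have := outDeg_pos h3.1
          rw [N.leaf_isLeaf i] at this
          omega
    · intro hp
      by_cases hji : j = i
      · rw [if_pos hji] at hp
        subst hji
        rw [Set.mem_singleton_iff] at hp
        subst hp
        exact ⟨rfl, rfl, List.isChain_singleton _⟩
      · rw [if_neg hji] at hp
        exact absurd hp (Set.notMem_empty p)
  rw [mu, hset]
  by_cases hji : j = i
  · rw [if_pos hji, if_pos hji, Set.ncard_singleton]
  · rw [if_neg hji, if_neg hji, Set.ncard_empty]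

lemma mu_leaf_eq (N : PhyloNetwork V n) (i : Fin n) :
    mu N (N.leaf i) = fun j => if j = i then (1 : ℕ) else 0 :=
  funext (mu_leaf N i)

lemma leafMu_le_muRep (N : PhyloNetwork V n) :
    ((Finset.univ.val : Multiset (Fin n)).map
      (fun i => (fun j => if j = i then (1 : ℕ) else 0))) ≤ muRep N := by
  classical
  have h1 : ((Finset.univ.val : Multiset (Fin n)).map N.leaf)
      ≤ (Finset.univ.val : Multiset V) := by
    rw [Multiset.le_iff_subset (Multiset.Nodup.map N.leaf_inj Finset.univ.nodup)]
    intro x _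
    simp
  have h2 := Multiset.map_le_map (f := mu N) h1
  rw [Multiset.map_map] at h2
  have h3 : ((Finset.univ.val : Multiset (Fin n)).map
        (fun i => (fun j => if j = i then (1 : ℕ) else 0)))
      = (Finset.univ.val : Multiset (Fin n)).map (mu N ∘ N.leaf) :=
    Multiset.map_congr rfl (fun i _ => (mu_leaf_eq N i).symm)
  rw [h3]
  exact h2

lemma card_muRep (N : PhyloNetwork V n) :
    Multiset.card (muRep N) = Fintype.card V := by
  rw [muRep, Multiset.card_map]
  rfl

end Aux

/-- For tree-child phylogenetic networks on the same `n` taxa, without out-degree 1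
tree nodes and with all hybrid nodes of in-degree at most `m`, the μ-distance is at
most `2(m+1)(n-1)`. -/
theorem muDist_le_diameter {V₁ V₂ : Type*} [Fintype V₁] [Fintype V₂] {n m : ℕ}
    (N₁ : PhyloNetwork V₁ n) (N₂ : PhyloNetwork V₂ n)
    (h₁ : TreeChild N₁) (h₂ : TreeChild N₂)
    (hout₁ : ∀ v : V₁, inDeg N₁.E v ≤ 1 → outDeg N₁.E v ≠ 1)
    (hout₂ : ∀ v : V₂, inDeg N₂.E v ≤ 1 → outDeg N₂.E v ≠ 1)
    (hm₁ : ∀ v : V₁, 1 < inDeg N₁.E v → inDeg N₁.E v ≤ m)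
    (hm₂ : ∀ v : V₂, 1 < inDeg N₂.E v → inDeg N₂.E v ≤ m) :
    muDist N₁ N₂ ≤ 2 * (m + 1) * (n - 1) := by
  classical
  have hL1 := leafMu_le_muRep N₁
  have hL2 := leafMu_le_muRep N₂
  set L : Multiset (Fin n → ℕ) := (Finset.univ.val : Multiset (Fin n)).map
    (fun i => (fun j => if j = i then (1 : ℕ) else 0)) with hLdef
  have hcardL : Multiset.card L = n := by
    rw [hLdef, Multiset.card_map]
    simp
  have hc1 := card_muRep N₁
  have hc2 := card_muRep N₂
  have d1 : Multiset.card (muRep N₁ - muRep N₂) ≤ Fintype.card V₁ - n := by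
    have h := Multiset.card_le_card (tsub_le_tsub_left hL2 (muRep N₁))
    rw [Multiset.card_sub hL1, hcardL, hc1] at h
    exact h
  have d2 : Multiset.card (muRep N₂ - muRep N₁) ≤ Fintype.card V₂ - n := by
    have h := Multiset.card_le_card (tsub_le_tsub_left hL1 (muRep N₂))
    rw [Multiset.card_sub hL2, hcardL, hc2] at h
    exact h
  have b1 := card_bound N₁ h₁ hout₁ hm₁
  have b2 := card_bound N₂ h₂ hout₂ hm₂
  unfold muDist
  have hexp : 2 * (m + 1) * (n - 1) = (m + 1) * (n - 1) + (m + 1) * (n - 1) := by ring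
  rw [hexp]
  generalize hQ : (m + 1) * (n - 1) = Q at b1 b2 ⊢
  omega
end
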